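/- arXiv:1606.04425 — 3 statements merged into one kernel-verified Lean document; each statement's English description precedes it below -/
import Mathlib

section
/- Let B > 0, F > 1 be real numbers such that log₁₀ F is irrational. Then the exponential growth series B·Fⁿ obeys Benford's Law: for every digit d ∈ {1, ..., 9}, the proportion, among n ∈ {0, 1, ..., N−1}, of indices n for which B·Fⁿ has first digit d, tends to log₁₀(1 + 1/d) as N → ∞. -/
/-!
For irrational `α` and a character `e_k` of `ℝ/ℤ` with `k ≠ 0`, the averages of `e_k (x + nα)`
are normalised geometric sums with ratio `e_k α ≠ 1`, so they tend to `0 = ∫ e_k`. The averages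
are uniformly bounded linear functionals, and trigonometric polynomials are dense in
`C(ℝ/ℤ, ℂ)`, so the averages of every continuous `f` tend to `∫ f` (Weyl). Squeezing the
indicator of `[a, b)` from below by continuous trapezoids gives the lower bound `b - a` for the
proportion of `n` with `fract (x + nα) ∈ [a, b)`; applying this to `[0, a)` and `[b, 1)` gives the
upper bound. Benford's law is the case `x = log₁₀ B`, `α = log₁₀ F` and
`[a, b) = [log₁₀ d, log₁₀ (d+1))`.
-/

open Filter
open scoped Classical

open MeasureTheory Finset Topology AddCircle

instance UnitAddCircle.isProbabilityMeasure_volume :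
    IsProbabilityMeasure (volume : Measure UnitAddCircle) :=
  ⟨UnitAddCircle.measure_univ⟩

section CompactSpace

variable {X : Type*} [TopologicalSpace X] [CompactSpace X]

lemma norm_sum_div_le_norm (f : C(X, ℂ)) (u : ℕ → X) (N : ℕ) :
    ‖(∑ n ∈ range N, f (u n)) / N‖ ≤ ‖f‖ := by
  rcases N.eq_zero_or_pos with rfl | hN
  · simp
  rw [norm_div, Complex.norm_natCast, div_le_iff₀ (by exact_mod_cast hN)]
  calc ‖∑ n ∈ range N, f (u n)‖ ≤ ∑ n ∈ range N, ‖f (u n)‖ := norm_sum_le _ _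
    _ ≤ ∑ _n ∈ range N, ‖f‖ := sum_le_sum fun n _ => f.norm_coe_le_norm (u n)
    _ = ‖f‖ * N := by simp [mul_comm]

lemma isClosed_setOf_tendsto_sum_div (u : ℕ → X) {L : C(X, ℂ) → ℂ} (hL : Continuous L) :
    IsClosed
      {f : C(X, ℂ) | Tendsto (fun N : ℕ => (∑ n ∈ range N, f (u n)) / N) atTop (𝓝 (L f))} := by
  refine Equicontinuous.isClosed_setOfPred_tendsto ?_ hL
  refine (LipschitzWith.uniformEquicontinuous _ 1 fun N => ?_).equicontinuous
  refine LipschitzWith.of_dist_le_mul fun f g => ?_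
  rw [dist_eq_norm, dist_eq_norm, NNReal.coe_one, one_mul, div_sub_div_same, ← sum_sub_distrib]
  exact norm_sum_div_le_norm (f - g) u N

variable [MeasurableSpace X] [OpensMeasurableSpace X] (μ : Measure X)

lemma ContinuousMap.integrable [IsFiniteMeasure μ] {E : Type*} [NormedAddCommGroup E]
    (f : C(X, E)) : Integrable f μ :=
  f.continuous.integrable_of_hasCompactSupport (.of_compactSpace _)

variable [IsProbabilityMeasure μ]

lemma lipschitzWith_one_integral : LipschitzWith 1 fun f : C(X, ℂ) => ∫ x, f x ∂μ := by
  refine LipschitzWith.of_dist_le_mul fun f g => ?_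
  rw [dist_eq_norm, dist_eq_norm, ← integral_sub (f.integrable μ) (g.integrable μ)]
  simpa using norm_integral_le_of_norm_le_const (ae_of_all μ (f - g).norm_coe_le_norm)

theorem tendsto_sum_div_integral_of_span_dense (u : ℕ → X) {s : Set C(X, ℂ)}
    (hs : (Submodule.span ℂ s).topologicalClosure = ⊤)
    (h : ∀ g ∈ s, Tendsto (fun N : ℕ => (∑ n ∈ range N, g (u n)) / N) atTop (𝓝 (∫ x, g x ∂μ)))
    (f : C(X, ℂ)) :
    Tendsto (fun N : ℕ => (∑ n ∈ range N, f (u n)) / N) atTop (𝓝 (∫ x, f x ∂μ)) := by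
  let V : Submodule ℂ C(X, ℂ) :=
    { carrier :=
        {f | Tendsto (fun N : ℕ => (∑ n ∈ range N, f (u n)) / N) atTop (𝓝 (∫ x, f x ∂μ))}
      add_mem' := fun {f g} hf hg => by
        simpa [sum_add_distrib, add_div, integral_add (f.integrable μ) (g.integrable μ)]
          using hf.add hg
      zero_mem' := by simp
      smul_mem' := fun c f hf => by
        simpa [← mul_sum, mul_div_assoc, integral_const_mul] using hf.const_mul c }
  have hV : IsClosed (V : Set C(X, ℂ)) :=
    isClosed_setOf_tendsto_sum_div u (lipschitzWith_one_integral μ).continuous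
  exact (hs ▸ Submodule.topologicalClosure_minimal _ (Submodule.span_le.2 fun g hg => h g hg) hV)
    trivial

end CompactSpace

lemma tendsto_geom_sum_div_zero {z : ℂ} (hz : ‖z‖ ≤ 1) (h1 : z ≠ 1) :
    Tendsto (fun N : ℕ => (∑ n ∈ range N, z ^ n) / N) atTop (𝓝 0) := by
  have hbound (N : ℕ) : ‖∑ n ∈ range N, z ^ n‖ ≤ 2 / ‖z - 1‖ := by
    rw [geom_sum_eq h1, norm_div]
    gcongr
    calc ‖z ^ N - 1‖ ≤ ‖z ^ N‖ + ‖(1 : ℂ)‖ := norm_sub_le _ _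
      _ ≤ 1 + 1 := by rw [norm_pow, norm_one]; gcongr; exact pow_le_one₀ (norm_nonneg z) hz
      _ = 2 := by norm_num
  refine squeeze_zero_norm (fun N => ?_) (tendsto_const_div_atTop_nhds_zero_nat (2 / ‖z - 1‖))
  rw [norm_div, Complex.norm_natCast]
  gcongr
  exact hbound N

lemma fourier_add_nsmul {T : ℝ} (k : ℤ) (x a : AddCircle T) (n : ℕ) :
    fourier k (x + n • a) = fourier k x * fourier k a ^ n := by
  rw [fourier_apply, fourier_apply, fourier_apply, smul_add, smul_comm k n a, toCircle_add,
    toCircle_nsmul]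
  push_cast
  rfl

lemma fourier_coe_ne_one {α : ℝ} (hα : Irrational α) {k : ℤ} (hk : k ≠ 0) :
    fourier k (α : UnitAddCircle) ≠ 1 := by
  intro h
  have h0 : k • (α : UnitAddCircle) = 0 :=
    injective_toCircle one_ne_zero (by ext; simpa using h)
  obtain ⟨m, hm⟩ :=
    (coe_eq_zero_iff 1).1 (by rw [AddCircle.coe_zsmul, h0] : ((k • α : ℝ) : UnitAddCircle) = 0)
  exact (hα.intCast_mul hk).ne_int m (by simpa using hm.symm)

lemma integral_fourier_of_ne_zero {T : ℝ} [Fact (0 < T)] {k : ℤ} (hk : k ≠ 0) :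
    ∫ y : AddCircle T, fourier k y = 0 :=
  integral_eq_zero_of_add_right_eq_neg (fourier_add_half_inv_index hk Fact.out)

lemma tendsto_sum_fourier_add_nsmul_div {α : ℝ} (hα : Irrational α) (x : UnitAddCircle) (k : ℤ) :
    Tendsto (fun N : ℕ => (∑ n ∈ range N, fourier k (x + n • (α : UnitAddCircle))) / N) atTop
      (𝓝 (∫ y : UnitAddCircle, fourier k y)) := by
  rcases eq_or_ne k 0 with rfl | hk
  · simp only [fourier_zero, sum_const, card_range, nsmul_eq_mul, mul_one, integral_const,
      probReal_univ, one_smul]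
    exact tendsto_const_nhds.congr' ((eventually_ne_atTop 0).mono fun N hN =>
      (div_self (Nat.cast_ne_zero.2 hN)).symm)
  · simp only [fourier_add_nsmul, ← mul_sum, mul_div_assoc, integral_fourier_of_ne_zero hk]
    simpa using (tendsto_geom_sum_div_zero (Circle.norm_coe _).le
      (fourier_coe_ne_one hα hk)).const_mul (fourier k x)

theorem tendsto_sum_add_nsmul_div_integral {α : ℝ} (hα : Irrational α) (x : UnitAddCircle)
    (f : C(UnitAddCircle, ℂ)) :
    Tendsto (fun N : ℕ => (∑ n ∈ range N, f (x + n • (α : UnitAddCircle))) / N) atTop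
      (𝓝 (∫ y, f y)) :=
  tendsto_sum_div_integral_of_span_dense volume _ span_fourier_closure_eq_top
    (by rintro _ ⟨k, rfl⟩; exact tendsto_sum_fourier_add_nsmul_div hα x k) f

/-- Weyl's form of equidistribution modulo one, tested against continuous functions on `ℝ/ℤ`;
`IsEquidistributedModOne.tendsto_card_filter_div` recovers the form with intervals. -/
def IsEquidistributedModOne (u : ℕ → ℝ) : Prop :=
  ∀ f : C(UnitAddCircle, ℝ),
    Tendsto (fun N : ℕ => (∑ n ∈ range N, f (u n)) / N) atTop (𝓝 (∫ y, f y))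

theorem isEquidistributedModOne_add_mul {α : ℝ} (hα : Irrational α) (x : ℝ) :
    IsEquidistributedModOne fun n => x + n * α := by
  intro f
  have := (Complex.continuous_re.tendsto _).comp (tendsto_sum_add_nsmul_div_integral hα x
    ((ContinuousMap.mk Complex.ofReal Complex.continuous_ofReal).comp f))
  simpa [Function.comp_def, integral_complex_ofReal] using this

noncomputable def trapezoid (a b δ t : ℝ) : ℝ := max 0 (min 1 (min (t - a) (b - t) / δ))

section trapezoid

variable {a b δ t : ℝ}

lemma continuous_trapezoid : Continuous (trapezoid a b δ) := by
  unfold trapezoid; fun_prop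

lemma trapezoid_nonneg : 0 ≤ trapezoid a b δ t := le_max_left _ _

lemma trapezoid_eq_zero (hδ : 0 ≤ δ) (ht : t ∉ Set.Ioo a b) : trapezoid a b δ t = 0 := by
  rw [Set.mem_Ioo, not_and_or, not_lt, not_lt] at ht
  refine max_eq_left (min_le_of_right_le (div_nonpos_of_nonpos_of_nonneg ?_ hδ))
  rcases ht with ht | ht
  · exact min_le_of_left_le (by linarith)
  · exact min_le_of_right_le (by linarith)

lemma trapezoid_le_indicator (hδ : 0 ≤ δ) : trapezoid a b δ t ≤ (Set.Ico a b).indicator 1 t := by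
  by_cases ht : t ∈ Set.Ico a b
  · simp [ht, trapezoid]
  · rw [trapezoid_eq_zero hδ fun h => ht (Set.Ioo_subset_Ico_self h)]
    exact Set.indicator_nonneg (fun _ _ => zero_le_one) t

lemma trapezoid_eq_one (hδ : 0 < δ) (ht : t ∈ Set.Icc (a + δ) (b - δ)) :
    trapezoid a b δ t = 1 := by
  have : 1 ≤ min (t - a) (b - t) / δ := by
    rw [le_div_iff₀ hδ, one_mul]; exact le_min (by linarith [ht.1]) (by linarith [ht.2])
  simp [trapezoid, min_eq_left this]

end trapezoid

lemma exists_continuous_le_indicator_fract {a b δ : ℝ} (ha : 0 ≤ a) (hb : b ≤ 1) (hδ : 0 < δ) :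
    ∃ g : C(UnitAddCircle, ℝ), (∀ t : ℝ, g t ≤ (Set.Ico a b).indicator 1 (Int.fract t)) ∧
      b - a - 2 * δ ≤ ∫ y, g y := by
  have hper : trapezoid a b δ 0 = trapezoid a b δ (0 + 1) := by
    rw [trapezoid_eq_zero hδ.le fun h => by linarith [h.1],
      trapezoid_eq_zero hδ.le fun h => by linarith [h.2]]
  let g : C(UnitAddCircle, ℝ) :=
    ⟨liftIco 1 0 (trapezoid a b δ), liftIco_continuous hper continuous_trapezoid.continuousOn⟩
  have hg (t : ℝ) : g t = trapezoid a b δ (Int.fract t) := by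
    rw [← coe_fract t]
    exact liftIco_coe_apply (f := trapezoid a b δ)
      ⟨Int.fract_nonneg t, by simpa using Int.fract_lt_one t⟩
  refine ⟨g, fun t => hg t ▸ trapezoid_le_indicator hδ.le, ?_⟩
  have hsub : Set.Icc (a + δ) (b - δ) ⊆ Set.Ioc 0 1 := fun t ht =>
    ⟨by linarith [ht.1], by linarith [ht.2]⟩
  calc b - a - 2 * δ ≤ volume.real (Set.Icc (a + δ) (b - δ)) := by
        rw [Real.volume_real_Icc]; exact le_max_left _ _ |>.trans_eq' (by ring)
    _ = ∫ t in Set.Icc (a + δ) (b - δ), (1 : ℝ) := by simp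
    _ = ∫ t in Set.Icc (a + δ) (b - δ), g t :=
        setIntegral_congr_fun measurableSet_Icc fun t ht => by
          rw [hg, Int.fract_eq_self.2 ⟨(hsub ht).1.le, by linarith [ht.2]⟩, trapezoid_eq_one hδ ht]
    _ ≤ ∫ t in Set.Ioc (0 : ℝ) 1, g t :=
        setIntegral_mono_set
          ((g.continuous.comp continuous_quotient_mk').integrableOn_Ioc (f := fun t : ℝ => g t))
          (ae_of_all _ fun t => show 0 ≤ g t from hg t ▸ trapezoid_nonneg) hsub.eventuallyLE
    _ = ∫ y, g y := by simpa using UnitAddCircle.integral_preimage 0 g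

lemma card_filter_fract_mem_Ico_eq_sum_indicator (u : ℕ → ℝ) (s : Finset ℕ) (a b : ℝ) :
    ((s.filter fun n => Int.fract (u n) ∈ Set.Ico a b).card : ℝ) =
      ∑ n ∈ s, (Set.Ico a b).indicator 1 (Int.fract (u n)) := by
  simp [Set.indicator_apply, sum_boole]

lemma card_filter_fract_mem_Ico_add (u : ℕ → ℝ) (s : Finset ℕ) {a b : ℝ} (hab : a ≤ b) :
    (s.filter fun n => Int.fract (u n) ∈ Set.Ico 0 a).card +
      (s.filter fun n => Int.fract (u n) ∈ Set.Ico a b).card +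
      (s.filter fun n => Int.fract (u n) ∈ Set.Ico b 1).card = s.card := by
  rw [card_filter, card_filter, card_filter, ← sum_add_distrib, ← sum_add_distrib,
    card_eq_sum_ones]
  refine sum_congr rfl fun n _ => ?_
  have h0 := Int.fract_nonneg (u n)
  have h1 := Int.fract_lt_one (u n)
  simp only [Set.mem_Ico]
  split_ifs <;> grind

namespace IsEquidistributedModOne

variable {u : ℕ → ℝ} {a b : ℝ}

lemma eventually_lt_card_filter_div (hu : IsEquidistributedModOne u) (ha : 0 ≤ a) (hb : b ≤ 1)
    {c : ℝ} (hc : c < b - a) :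
    ∀ᶠ N : ℕ in atTop,
      c < (((range N).filter fun n => Int.fract (u n) ∈ Set.Ico a b).card : ℝ) / N := by
  obtain ⟨g, hg_le, hg_int⟩ :=
    exists_continuous_le_indicator_fract ha hb (δ := (b - a - c) / 4) (by linarith)
  filter_upwards [(hu g).eventually_const_lt (by linarith : c < ∫ y, g y)] with N hN
  refine hN.trans_le (div_le_div_of_nonneg_right ?_ N.cast_nonneg)
  rw [card_filter_fract_mem_Ico_eq_sum_indicator]
  exact sum_le_sum fun n _ => hg_le (u n)

theorem tendsto_card_filter_div (hu : IsEquidistributedModOne u) (ha : 0 ≤ a) (hab : a ≤ b)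
    (hb : b ≤ 1) :
    Tendsto (fun N : ℕ =>
        (((range N).filter fun n => Int.fract (u n) ∈ Set.Ico a b).card : ℝ) / N)
      atTop (𝓝 (b - a)) := by
  refine tendsto_order.2 ⟨fun c hc => hu.eventually_lt_card_filter_div ha hb hc, fun c hc => ?_⟩
  -- the upper bound comes from the lower bounds on the complementary intervals `[0, a)`, `[b, 1)`
  have h0a := hu.eventually_lt_card_filter_div le_rfl (hab.trans hb)
    (c := a - (c - (b - a)) / 2) (by linarith)
  have hb1 := hu.eventually_lt_card_filter_div (ha.trans hab) le_rfl
    (c := 1 - b - (c - (b - a)) / 2) (by linarith)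
  filter_upwards [h0a, hb1, eventually_ne_atTop 0] with N h0a hb1 hN
  have hsum := congrArg (fun m : ℕ => (m : ℝ) / N) (card_filter_fract_mem_Ico_add u (range N) hab)
  simp only [Nat.cast_add, add_div, card_range, div_self (Nat.cast_ne_zero.2 hN : (N : ℝ) ≠ 0)]
    at hsum
  linarith

end IsEquidistributedModOne

/-- An exponential growth series `B * F ^ n` with irrational `log₁₀ F` obeys Benford's Law. -/
theorem exponential_growth_benford (B F : ℝ) (hB : 0 < B) (hF : 1 < F)
    (hirr : Irrational (Real.logb 10 F)) :
    ∀ d ∈ Finset.Icc (1 : ℕ) 9,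
      Tendsto (fun N : ℕ =>
          (((Finset.range N).filter fun n =>
            Int.fract (Real.logb 10 (B * F ^ n))
              ∈ Set.Ico (Real.logb 10 d) (Real.logb 10 (d + 1))).card : ℝ) / (N : ℝ))
        atTop (nhds (Real.logb 10 (1 + 1 / (d : ℝ)))) := by
  intro d hd
  have hd1 : (1 : ℝ) ≤ d := by exact_mod_cast (Finset.mem_Icc.1 hd).1
  have hd9 : (d : ℝ) + 1 ≤ 10 := by exact_mod_cast Nat.add_le_add_right (Finset.mem_Icc.1 hd).2 1
  have hlog (n : ℕ) : Real.logb 10 (B * F ^ n) = Real.logb 10 B + n * Real.logb 10 F := by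
    rw [Real.logb_mul hB.ne' (pow_ne_zero n (by linarith)), Real.logb_pow]
  have hdigit : Real.logb 10 (1 + 1 / (d : ℝ)) = Real.logb 10 (d + 1) - Real.logb 10 d := by
    rw [← Real.logb_div (by linarith) (by linarith), add_div, div_self (by linarith), add_comm]
  simp only [hlog, hdigit]
  refine (isEquidistributedModOne_add_mul hirr _).tendsto_card_filter_div
    (Real.logb_nonneg (by norm_num) hd1)
    (Real.logb_le_logb_of_le (by norm_num) (by linarith) (by linarith)) ?_
  calc Real.logb 10 (d + 1) ≤ Real.logb 10 10 :=
        Real.logb_le_logb_of_le (by norm_num) (by linarith) hd9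
    _ = 1 := Real.logb_self_eq_one (by norm_num)
end

section
/- Continuous exponential growth over any full order of magnitude is Benford: for every real F > 1, every real B > 0, and every digit d ∈ {1, ..., 9}, the Lebesgue measure of the set of times t in the interval [log_F B, log_F(10·B)) for which Int.fract(log₁₀(F^t)) lies in [log₁₀ d, log₁₀(d+1)) equals log₁₀(1 + 1/d) · log_F(10). -/
/-!
Since `log₁₀ (F ^ t) = c t` with `c = log₁₀ F`, growing from `B` to `10 B` means `c t` runs
through an interval of length one. The set of reals whose fractional part lies in a fixed set is
invariant under integer translations, so its measure inside any interval `[x, x + 1)` (a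
fundamental domain of `ℤ`) is its measure inside `[0, 1)`; rescaling time by `c` multiplies
this by `1 / c = log_F 10`.
-/

open MeasureTheory Set

theorem volume_fract_preimage_inter_Ico {s : Set ℝ} (hs : MeasurableSet s) (x : ℝ) :
    volume (Int.fract ⁻¹' s ∩ Ico x (x + 1)) = volume (s ∩ Ico 0 1) := by
  have hinv : ∀ g : AddSubgroup.zmultiples (1 : ℝ),
      (g +ᵥ ·) ⁻¹' (Int.fract ⁻¹' s) = Int.fract ⁻¹' s := by
    rintro ⟨_, n, rfl⟩
    ext u
    simp [Int.fract_intCast_add]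
  have hfund (y : ℝ) := isAddFundamentalDomain_Ioc zero_lt_one y
  calc volume (Int.fract ⁻¹' s ∩ Ico x (x + 1))
      = volume (Int.fract ⁻¹' s ∩ Ioc x (x + 1)) :=
        measure_congr ((ae_eq_refl _).inter Ico_ae_eq_Ioc)
    _ = volume (Int.fract ⁻¹' s ∩ Ioc 0 (0 + 1)) :=
        (hfund x).measure_set_eq (hfund 0) (measurable_fract hs) hinv
    _ = volume (Int.fract ⁻¹' s ∩ Ico 0 1) := by
        rw [zero_add]; exact measure_congr ((ae_eq_refl _).inter Ico_ae_eq_Ioc.symm)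
    _ = volume (s ∩ Ico 0 1) := by
        congr 1
        ext u
        simp +contextual [Int.fract_eq_self.mpr]

theorem volume_setOf_mem_Ico_fract_mul_mem {c : ℝ} (hc : 0 < c) {s : Set ℝ}
    (hs : MeasurableSet s) (a : ℝ) :
    volume {t : ℝ | t ∈ Ico a (a + c⁻¹) ∧ Int.fract (c * t) ∈ s}
      = ENNReal.ofReal c⁻¹ * volume (s ∩ Ico 0 1) := by
  have hpre : {t : ℝ | t ∈ Ico a (a + c⁻¹) ∧ Int.fract (c * t) ∈ s}
      = (c * ·) ⁻¹' (Int.fract ⁻¹' s ∩ Ico (c * a) (c * a + 1)) := by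
    ext t
    simp only [mem_ofPred_eq, mem_preimage, mem_inter_iff, mem_Ico]
    rw [← mul_le_mul_iff_right₀ hc, ← mul_lt_mul_iff_right₀ hc, mul_add, mul_inv_cancel₀ hc.ne']
    tauto
  rw [hpre, Real.volume_preimage_mul_left hc.ne', volume_fract_preimage_inter_Ico hs,
    abs_of_pos (inv_pos.mpr hc)]

theorem Ico_logb_digit_subset {d : ℝ} (hd : 1 ≤ d) (hd9 : d ≤ 9) :
    Ico (Real.logb 10 d) (Real.logb 10 (d + 1)) ⊆ Ico 0 1 := by
  refine Ico_subset_Ico (Real.logb_nonneg (by norm_num) hd) ?_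
  calc Real.logb 10 (d + 1) ≤ Real.logb 10 10 :=
        Real.logb_le_logb_of_le (by norm_num) (by linarith) (by linarith)
    _ = 1 := Real.logb_self_eq_one (by norm_num)

/-- Continuous exponential growth over any full order of magnitude is Benford: the time
spent with first digit `d` during growth from `B` to `10·B` equals
`log₁₀(1 + 1/d) · log_F 10`. -/
theorem continuous_growth_full_order_benford (F B : ℝ) (hF : 1 < F) (hB : 0 < B) :
    ∀ d ∈ Finset.Icc (1 : ℕ) 9,
      volume {t : ℝ | t ∈ Set.Ico (Real.logb F B) (Real.logb F (10 * B)) ∧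
          Int.fract (Real.logb 10 (F ^ t))
            ∈ Set.Ico (Real.logb 10 (d : ℝ)) (Real.logb 10 ((d : ℝ) + 1))}
        = ENNReal.ofReal (Real.logb 10 (1 + 1 / (d : ℝ)) * Real.logb F 10) := by
  intro d hd
  obtain ⟨hd1, hd9⟩ := Finset.mem_Icc.mp hd
  have hdigit : Ico (Real.logb 10 d) (Real.logb 10 (d + 1)) ⊆ Ico 0 1 :=
    Ico_logb_digit_subset (by exact_mod_cast hd1) (by exact_mod_cast hd9)
  set c := Real.logb 10 F
  have hc : 0 < c := Real.logb_pos (by norm_num) hF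
  have hinv : Real.logb F 10 = c⁻¹ := (Real.inv_logb 10 F).symm
  have hend : Real.logb F (10 * B) = Real.logb F B + c⁻¹ := by
    rw [Real.logb_mul (by norm_num) hB.ne', ← hinv, add_comm]
  have hpow (t : ℝ) : Real.logb 10 (F ^ t) = c * t := by
    rw [Real.logb_rpow_eq_mul_logb_of_pos (by linarith), mul_comm]
  simp_rw [hpow, hend]
  rw [volume_setOf_mem_Ico_fract_mul_mem hc measurableSet_Ico,
    inter_eq_left.mpr hdigit, Real.volume_Ico,
    ← ENNReal.ofReal_mul (inv_nonneg.mpr hc.le), ← Real.logb_div (by positivity) (by positivity),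
    hinv, mul_comm]
  congr 3
  field_simp
end

section
/- The base-10 logarithm of the golden ratio is irrational: log₁₀((1 + √5)/2) is an irrational real number; consequently the Fibonacci-type growth factor φ = (1+√5)/2 is not an anomalous growth factor. -/
/-! If `log₁₀ φ = p / q` then `φ ^ q = 10 ^ p` would be rational. But every positive power
of `φ` is irrational, since `φ ^ (n + 1) = F (n + 1) φ + F n` with Fibonacci numbers `F`. -/

open Real goldenRatio

theorem pow_den_eq_zpow_num_of_logb_eq {b x : ℝ} {q : ℚ} (hb : 0 < b) (hb₁ : b ≠ 1)
    (hx : 0 < x) (h : logb b x = q) : x ^ q.den = b ^ q.num := by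
  calc x ^ q.den = (b ^ (q : ℝ)) ^ (q.den : ℝ) := by
        rw [← h, rpow_logb hb hb₁ hx, rpow_natCast]
    _ = b ^ ((q * q.den : ℚ) : ℝ) := by push_cast; rw [← rpow_mul hb.le]
    _ = b ^ q.num := by rw [Rat.mul_den_eq_num, Rat.cast_intCast, rpow_intCast]

theorem irrational_logb_of_forall_irrational_pow {b : ℚ} {x : ℝ} (hb : 0 < b) (hb₁ : b ≠ 1)
    (hx : 0 < x) (hpow : ∀ n ≠ 0, Irrational (x ^ n)) : Irrational (logb b x) := by
  rintro ⟨q, hq⟩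
  have hden :=
    pow_den_eq_zpow_num_of_logb_eq (by exact_mod_cast hb) (by exact_mod_cast hb₁) hx hq.symm
  exact hpow q.den q.den_ne_zero ⟨b ^ q.num, by rw [hden]; push_cast; rfl⟩

theorem goldenRatio_pow_irrational {n : ℕ} (hn : n ≠ 0) : Irrational (φ ^ n) := by
  obtain ⟨m, rfl⟩ := Nat.exists_eq_succ_of_ne_zero hn
  rw [← goldenRatio_mul_fib_succ_add_fib]
  exact (goldenRatio_irrational.mul_natCast (Nat.fib_pos.2 m.succ_pos).ne').add_natCast _

/-- The base-10 logarithm of the golden ratio is irrational, so the Fibonacci growth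
factor `φ = (1 + √5)/2` is not an anomalous growth factor. -/
theorem logb_golden_ratio_irrational :
    Irrational (Real.logb 10 ((1 + Real.sqrt 5) / 2)) :=
  irrational_logb_of_forall_irrational_pow (b := 10) (by norm_num) (by norm_num) goldenRatio_pos
    fun _ => goldenRatio_pow_irrational
end
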